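/- arXiv:1706.04649 — 3 statements merged into one kernel-verified Lean document; each statement's English description precedes it below -/
import Mathlib

section
/- Let λ be a partition with at most n parts and β, β′ upper λ-tuples. Then S_λ(β) = S_λ(β′) if and only if Δ_λ(β) = Δ_λ(β′), where Δ_λ is the R_λ-core map; consequently the distinct row bound tableau sets are precisely indexed by the R_λ-increasing upper tuples. -/
def IsUpperTuple (n : ℕ) (ν : Fin n → ℕ) : Prop :=
  ∀ i : Fin n, i.val + 1 ≤ ν i ∧ ν i ≤ n

def IsRIncr (n : ℕ) (R : Finset ℕ) (ν : Fin n → ℕ) : Prop :=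
  ∀ i j : Fin n, j.val = i.val + 1 → (i.val + 1) ∉ R → ν i < ν j

def IsRIncrUpper (n : ℕ) (R : Finset ℕ) (ν : Fin n → ℕ) : Prop :=
  IsUpperTuple n ν ∧ IsRIncr n R ν

def IsRPerm (n : ℕ) (R : Finset ℕ) (π : Equiv.Perm (Fin n)) : Prop :=
  ∀ i j : Fin n, j.val = i.val + 1 → (i.val + 1) ∉ R → π i < π j

def Avoids312 (n : ℕ) (π : Equiv.Perm (Fin n)) : Prop :=
  ¬ ∃ a b c : Fin n, a < b ∧ b < c ∧ π b < π a ∧ π b < π c ∧ π c < π a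

def RAvoids312 (n : ℕ) (R : Finset ℕ) (π : Equiv.Perm (Fin n)) : Prop :=
  ¬ ∃ a b c : Fin n, a < b ∧ b < c ∧
      (∃ q ∈ R, a.val + 1 ≤ q ∧ q ≤ b.val) ∧
      (∃ q ∈ R, b.val + 1 ≤ q ∧ q ≤ c.val) ∧
      π b < π a ∧ π b < π c ∧ π c < π a

def carrelEnd (n : ℕ) (R : Finset ℕ) (i : Fin n) : ℕ :=
  ((insert n R).filter (fun q => i.val + 1 ≤ q)).min'
    ⟨n, Finset.mem_filter.mpr ⟨Finset.mem_insert_self n R, i.isLt⟩⟩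

def SameCarrel {n : ℕ} (R : Finset ℕ) (i j : Fin n) : Prop :=
  ∀ q ∈ R, ¬(i.val + 1 ≤ q ∧ q ≤ j.val)

def IsCritical (n : ℕ) (R : Finset ℕ) (ν : Fin n → ℕ) (i : Fin n) : Prop :=
  ∀ j : Fin n, i < j → SameCarrel R i j → ν i + j.val < ν j + i.val

open Classical in
noncomputable def coreMap (n : ℕ) (R : Finset ℕ) (ν : Fin n → ℕ) (i : Fin n) : ℕ :=
  let s : Finset (Fin n) :=
    Finset.univ.filter (fun x => i ≤ x ∧ SameCarrel R i x ∧ IsCritical n R ν x)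
  if h : s.Nonempty then ν (s.min' h) - ((s.min' h).val - i.val) else 0

def critList (n : ℕ) (R : Finset ℕ) (ν : Fin n → ℕ) : Set (Fin n × ℕ) :=
  {p | IsCritical n R ν p.1 ∧ p.2 = ν p.1}

def rankTuple (n : ℕ) (R : Finset ℕ) (π : Equiv.Perm (Fin n)) (i : Fin n) : ℕ :=
  (((Finset.univ.filter (fun j : Fin n => j.val < carrelEnd n R i)).image
      (fun j => (π j).val + 1)).sort (· ≤ ·)).getD i.val 0

def GaplessCond (n : ℕ) (R : Finset ℕ) (γ : Fin n → ℕ) : Prop :=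
  ∀ q : ℕ, q ∈ R → ∀ (_ : 0 < q) (h2 : q < n),
    γ ⟨q, h2⟩ < γ ⟨q - 1, by omega⟩ →
      (q + (γ ⟨q - 1, by omega⟩ - γ ⟨q, h2⟩ + 1) ≤ carrelEnd n R ⟨q, h2⟩ ∧
        ∀ t : ℕ, t < γ ⟨q - 1, by omega⟩ - γ ⟨q, h2⟩ + 1 → ∀ (ht : q + t < n),
          γ ⟨q + t, ht⟩ =
            γ ⟨q - 1, by omega⟩ - (γ ⟨q - 1, by omega⟩ - γ ⟨q, h2⟩ + 1) + 1 + t)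

def IsRProj (n : ℕ) (R : Finset ℕ) (σ π : Equiv.Perm (Fin n)) : Prop :=
  IsRPerm n R π ∧ ∀ q ∈ R,
    (Finset.univ.filter (fun j : Fin n => j.val < q)).image (fun j => σ j) =
    (Finset.univ.filter (fun j : Fin n => j.val < q)).image (fun j => π j)

/-- The set of semistandard tableaux of shape μ with (0-based) entries in {0, ..., n-1}
(representing values in [n]) whose entry at the end of each row i is at most β_i
(with β recorded 1-based, entries 0-based). -/
def RowBoundSet (n : ℕ) (μ : YoungDiagram) (β : Fin n → ℕ) :
    Set (SemistandardYoungTableau μ) :=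
  {T | (∀ c ∈ μ.cells, T c.1 c.2 < n) ∧
    ∀ i : Fin n, 0 < μ.rowLen i.val → T i.val (μ.rowLen i.val - 1) < β i}

/-- R_λ: the set of (nonzero) column lengths of μ that are less than n. -/
def Rlam (n : ℕ) (μ : YoungDiagram) : Finset ℕ :=
  ((Finset.range (μ.rowLen 0)).image μ.colLen).filter (fun c => c < n)

section Aux

variable {n : ℕ} {R : Finset ℕ}

lemma sc_self (i : Fin n) : SameCarrel R i i := by
  intro q hq h; omega

lemma sc_mono {i j k l : Fin n} (h : SameCarrel R i j) (hik : i.val ≤ k.val)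
    (hlj : l.val ≤ j.val) : SameCarrel R k l := by
  intro q hq hq2; exact h q hq ⟨by omega, by omega⟩

lemma sc_trans {i k j : Fin n} (h1 : SameCarrel R i k) (h2 : SameCarrel R k j) :
    SameCarrel R i j := by
  intro q hq hq2
  by_cases hc : q ≤ k.val
  · exact h1 q hq ⟨hq2.1, hc⟩
  · exact h2 q hq ⟨by omega, hq2.2⟩

lemma rincr_growth {α : Fin n → ℕ} (hα : IsRIncr n R α) :
    ∀ d : ℕ, ∀ i j : Fin n, j.val = i.val + d → SameCarrel R i j → α i + d ≤ α j := by
  intro d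
  induction d with
  | zero =>
    intro i j hj _
    have : i = j := Fin.ext (by omega)
    subst this; omega
  | succ d ih =>
    intro i j hj hsc
    have hlt : i.val + d < n := by omega
    have h1 : α i + d ≤ α ⟨i.val + d, hlt⟩ :=
      ih i ⟨i.val + d, hlt⟩ rfl (sc_mono hsc le_rfl (show i.val + d ≤ j.val by omega))
    have h2 : α ⟨i.val + d, hlt⟩ < α j := by
      refine hα ⟨i.val + d, hlt⟩ j (show j.val = i.val + d + 1 from hj) ?_
      intro hq
      exact hsc _ hq ⟨show i.val + 1 ≤ i.val + d + 1 by omega, show i.val + d + 1 ≤ j.val by omega⟩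
    omega

lemma coreMap_spec (ν : Fin n → ℕ) (hν : ∀ i : Fin n, i.val + 1 ≤ ν i) (i : Fin n) :
    ∃ x : Fin n, i ≤ x ∧ SameCarrel R i x ∧
      coreMap n R ν i + x.val = ν x + i.val ∧
      ∀ j : Fin n, i ≤ j → SameCarrel R i j → coreMap n R ν i + j.val ≤ ν j + i.val := by
  classical
  set D : Finset (Fin n) := Finset.univ.filter (fun j => i ≤ j ∧ SameCarrel R i j) with hD
  have hiD : i ∈ D := by simp [hD, sc_self]
  have hDne : D.Nonempty := ⟨i, hiD⟩
  set g : Fin n → ℕ := fun j => ν j + i.val - j.val with hg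
  set m := D.inf' hDne g with hm
  have hmin : ∀ j ∈ D, m ≤ g j := fun j hj => Finset.inf'_le g hj
  set A : Finset (Fin n) := D.filter (fun j => g j = m) with hA
  have hAne : A.Nonempty := by
    obtain ⟨b, hb, hbe⟩ := Finset.exists_mem_eq_inf' hDne g
    exact ⟨b, Finset.mem_filter.mpr ⟨hb, by rw [hm]; exact hbe.symm⟩⟩
  set x := A.max' hAne with hx
  have hxA : x ∈ A := A.max'_mem hAne
  have hxD : x ∈ D := (Finset.mem_filter.mp hxA).1
  have hxg : g x = m := (Finset.mem_filter.mp hxA).2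
  obtain ⟨hxi, hxsc⟩ : i ≤ x ∧ SameCarrel R i x := (Finset.mem_filter.mp hxD).2
  have hcrit : IsCritical n R ν x := by
    intro j hxj hscxj
    have hjD : j ∈ D := by
      simp only [hD, Finset.mem_filter, Finset.mem_univ, true_and]
      exact ⟨le_trans hxi (le_of_lt hxj), sc_trans hxsc hscxj⟩
    have hne : g j ≠ m := by
      intro he
      have hjA : j ∈ A := by simp [hA, hjD, he]
      have := A.le_max' j hjA
      rw [← hx] at this
      exact absurd hxj (not_lt.mpr this)
    have h1 : m ≤ g j := hmin j hjD
    have h2 := hν j; have h3 := hν x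
    have h4 : x.val < j.val := hxj
    have h5 : i.val ≤ x.val := hxi
    simp only [hg] at h1 hxg hne
    omega
  have hval : coreMap n R ν i = ν x - (x.val - i.val) := by
    unfold coreMap
    simp only
    split
    case isTrue h =>
      have hxmem : x ∈ Finset.univ.filter
          (fun y : Fin n => i ≤ y ∧ SameCarrel R i y ∧ IsCritical n R ν y) := by
        simp only [Finset.mem_filter, Finset.mem_univ, true_and]
        exact ⟨hxi, hxsc, hcrit⟩
      have hminx : Finset.min' _ h = x := by
        refine le_antisymm (Finset.min'_le _ x hxmem) (Finset.le_min' _ _ x ?_)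
        intro y hy
        obtain ⟨hyi, hysc, hycrit⟩ := (Finset.mem_filter.mp hy).2
        by_contra hyx
        push_neg at hyx
        have hyx' : y < x := hyx
        have hscyx : SameCarrel R y x := sc_mono hxsc (Fin.le_def.mp hyi) le_rfl
        have := hycrit x hyx' hscyx
        have hyD : y ∈ D := by
          simp only [hD, Finset.mem_filter, Finset.mem_univ, true_and]
          exact ⟨hyi, hysc⟩
        have h1 := hmin y hyD
        have h2 := hν y; have h3 := hν x
        have h4 : i.val ≤ y.val := hyi
        have h5 : y.val < x.val := hyx'
        simp only [hg] at h1 hxg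
        omega
      rw [hminx]
    case isFalse h =>
      exact absurd ⟨x, Finset.mem_filter.mpr ⟨Finset.mem_univ x, hxi, hxsc, hcrit⟩⟩ h
  have h3 := hν x
  have h5 : i.val ≤ x.val := hxi
  refine ⟨x, hxi, hxsc, by omega, ?_⟩
  intro j hij hsc
  have hjD : j ∈ D := by
    simp only [hD, Finset.mem_filter, Finset.mem_univ, true_and]; exact ⟨hij, hsc⟩
  have h1 := hmin j hjD
  have h2 := hν j
  simp only [hg] at h1 hxg
  have h6 : i.val ≤ j.val := hij
  omega

lemma coreMap_upper {ν : Fin n → ℕ} (hν : IsUpperTuple n ν) :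
    IsUpperTuple n (coreMap n R ν) := by
  intro i
  obtain ⟨x, hxi, hxsc, heq, hall⟩ := coreMap_spec (R := R) ν (fun i => (hν i).1) i
  have h1 := (hν x).1
  have h2 := (hν i).2
  have h3 := hall i le_rfl (sc_self (R := R) i)
  have h5 : i.val ≤ x.val := hxi
  exact ⟨by omega, by omega⟩

lemma coreMap_rincr {ν : Fin n → ℕ} (hν : IsUpperTuple n ν) :
    IsRIncr n R (coreMap n R ν) := by
  intro i j hj hnR
  obtain ⟨_, _, _, _, halli⟩ := coreMap_spec (R := R) ν (fun i => (hν i).1) i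
  obtain ⟨x, hxj, hxsc, heq, _⟩ := coreMap_spec (R := R) ν (fun i => (hν i).1) j
  have hjx : j.val ≤ x.val := hxj
  have hscix : SameCarrel R i x := by
    intro q hq hq2
    rcases Nat.eq_or_lt_of_le hq2.1 with h | h
    · exact hnR (h ▸ hq)
    · exact hxsc q hq ⟨by omega, hq2.2⟩
  have hix : i ≤ x := Fin.le_def.mpr (by omega)
  have := halli x hix hscix
  omega

end Aux

section Shape

variable {n : ℕ} {μ : YoungDiagram}

lemma rowLen_eq_of_sameCarrel {i j : Fin n} (hij : i ≤ j)
    (hsc : SameCarrel (Rlam n μ) i j) : μ.rowLen j.val = μ.rowLen i.val := by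
  have hij' : i.val ≤ j.val := hij
  have hle := μ.rowLen_anti i.val j.val hij'
  rcases Nat.eq_or_lt_of_le hle with h | hlt
  · exact h
  · exfalso
    set c := μ.rowLen j.val with hc
    have hq1 : i.val < μ.colLen c :=
      YoungDiagram.mem_iff_lt_colLen.mp (YoungDiagram.mem_iff_lt_rowLen.mpr hlt)
    have hq2 : μ.colLen c ≤ j.val := by
      by_contra hcon
      push_neg at hcon
      have := YoungDiagram.mem_iff_lt_rowLen.mp (YoungDiagram.mem_iff_lt_colLen.mpr hcon)
      omega
    have hqR : μ.colLen c ∈ Rlam n μ := by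
      simp only [Rlam, Finset.mem_filter, Finset.mem_image, Finset.mem_range]
      refine ⟨⟨c, ?_, rfl⟩, by have := j.isLt; omega⟩
      have := μ.rowLen_anti 0 i.val (Nat.zero_le _)
      omega
    exact hsc _ hqR ⟨by omega, hq2⟩

lemma sameCarrel_of_rowLen_eq {i j : Fin n} (hij : i ≤ j)
    (heq : μ.rowLen j.val = μ.rowLen i.val) : SameCarrel (Rlam n μ) i j := by
  intro q hq hq2
  obtain ⟨c, hcr, hc⟩ : ∃ c ∈ Finset.range (μ.rowLen 0), μ.colLen c = q := by
    simpa using (Finset.mem_filter.mp hq).1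
  have hij' : i.val ≤ j.val := hij
  have h1 : (q - 1, c) ∈ μ := YoungDiagram.mem_iff_lt_colLen.mpr (by omega)
  have h2 : (q, c) ∉ μ := by
    rw [YoungDiagram.mem_iff_lt_colLen]; omega
  rw [YoungDiagram.mem_iff_lt_rowLen] at h1 h2
  push_neg at h2
  have h3 := μ.rowLen_anti i.val (q - 1) (by omega)
  have h4 := μ.rowLen_anti q j.val (by omega)
  omega

lemma rincr_upper_forced (hrows : μ.colLen 0 ≤ n) {α : Fin n → ℕ}
    (h : IsRIncrUpper n (Rlam n μ) α) {i : Fin n}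
    (h0 : μ.rowLen i.val = 0) : α i = i.val + 1 := by
  have hcl : μ.colLen 0 ≤ i.val := by
    by_contra hcon
    push_neg at hcon
    have := YoungDiagram.mem_iff_lt_rowLen.mp (YoungDiagram.mem_iff_lt_colLen.mpr hcon)
    omega
  have key : ∀ d : ℕ, ∀ k : Fin n, i.val ≤ k.val → k.val + d = n - 1 → α k + d ≤ n := by
    intro d
    induction d with
    | zero => intro k _ _; exact (h.1 k).2
    | succ d ih =>
      intro k hik hkd
      have hlt : k.val + 1 < n := by omega
      have hstep : α k < α ⟨k.val + 1, hlt⟩ := by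
        refine h.2 k ⟨k.val + 1, hlt⟩ rfl ?_
        intro hq
        obtain ⟨c, hcr, hc⟩ : ∃ c ∈ Finset.range (μ.rowLen 0), μ.colLen c = k.val + 1 := by
          simpa using (Finset.mem_filter.mp hq).1
        have := μ.colLen_anti 0 c (Nat.zero_le _)
        omega
      have := ih ⟨k.val + 1, hlt⟩ (show i.val ≤ k.val + 1 by omega)
        (show k.val + 1 + d = n - 1 by omega)
      omega
  have h1 := (h.1 i).1
  have h2 := key (n - 1 - i.val) i le_rfl (by have := i.isLt; omega)
  have := i.isLt
  omega

lemma ssyt_col_chain (T : SemistandardYoungTableau μ) (c : ℕ) :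
    ∀ d i : ℕ, (i + d, c) ∈ μ → T i c + d ≤ T (i + d) c := by
  intro d
  induction d with
  | zero => intro i _; simp
  | succ d ih =>
    intro i h
    have hidx : i + (d + 1) = i + d + 1 := rfl
    rw [hidx] at h ⊢
    have h' : (i + d, c) ∈ μ := μ.up_left_mem (by omega) le_rfl h
    have h1 := T.col_strict (show i + d < i + d + 1 by omega) h
    have h2 := ih i h'
    omega

end Shape

section MaxTab

variable {n : ℕ} {μ : YoungDiagram}

open Classical in
noncomputable def maxEntry (n : ℕ) (μ : YoungDiagram) (hrows : μ.colLen 0 ≤ n)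
    (α : Fin n → ℕ) : ℕ → ℕ → ℕ := fun r c =>
  if h : (r, c) ∈ μ then
    (Finset.univ.filter (fun j : Fin n => r ≤ j.val ∧ c < μ.rowLen j.val)).inf'
      ⟨⟨r, lt_of_lt_of_le (YoungDiagram.mem_iff_lt_colLen.mp
          (μ.up_left_mem le_rfl (Nat.zero_le c) h)) hrows⟩,
        by simp [YoungDiagram.mem_iff_lt_rowLen.mp h]⟩
      (fun j => α j + r - (j.val + 1))
  else 0

lemma maxEntry_le {hrows : μ.colLen 0 ≤ n} {α : Fin n → ℕ} {r c : ℕ} (h : (r, c) ∈ μ)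
    {j : Fin n} (hj : r ≤ j.val ∧ c < μ.rowLen j.val) :
    maxEntry n μ hrows α r c ≤ α j + r - (j.val + 1) := by
  rw [maxEntry, dif_pos h]
  exact Finset.inf'_le _ (by simp [hj])

lemma le_maxEntry {hrows : μ.colLen 0 ≤ n} {α : Fin n → ℕ} {r c : ℕ} (h : (r, c) ∈ μ)
    {a : ℕ} (ha : ∀ j : Fin n, r ≤ j.val → c < μ.rowLen j.val → a ≤ α j + r - (j.val + 1)) :
    a ≤ maxEntry n μ hrows α r c := by
  rw [maxEntry, dif_pos h]
  exact Finset.le_inf' _ _ (fun j hj => by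
    simp only [Finset.mem_filter, Finset.mem_univ, true_and] at hj
    exact ha j hj.1 hj.2)

lemma exists_maxEntry {hrows : μ.colLen 0 ≤ n} {α : Fin n → ℕ} {r c : ℕ} (h : (r, c) ∈ μ) :
    ∃ j : Fin n, r ≤ j.val ∧ c < μ.rowLen j.val ∧
      maxEntry n μ hrows α r c = α j + r - (j.val + 1) := by
  have hr : r < n := lt_of_lt_of_le (YoungDiagram.mem_iff_lt_colLen.mp
    (μ.up_left_mem le_rfl (Nat.zero_le c) h)) hrows
  have hne : (Finset.univ.filter (fun j : Fin n => r ≤ j.val ∧ c < μ.rowLen j.val)).Nonempty :=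
    ⟨⟨r, hr⟩, by simp [YoungDiagram.mem_iff_lt_rowLen.mp h]⟩
  obtain ⟨b, hb, hbe⟩ := Finset.exists_mem_eq_inf' hne (fun j : Fin n => α j + r - (j.val + 1))
  simp only [Finset.mem_filter, Finset.mem_univ, true_and] at hb
  refine ⟨b, hb.1, hb.2, ?_⟩
  rw [maxEntry, dif_pos h]
  exact hbe

noncomputable def maxSSYT (n : ℕ) (μ : YoungDiagram) (hrows : μ.colLen 0 ≤ n)
    (α : Fin n → ℕ) (hα : ∀ j : Fin n, j.val + 1 ≤ α j) : SemistandardYoungTableau μ where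
  entry := maxEntry n μ hrows α
  row_weak' := by
    intro i j1 j2 hj h2
    have h1 : (i, j1) ∈ μ := μ.up_left_mem le_rfl (le_of_lt hj) h2
    obtain ⟨b, hb1, hb2, hbe⟩ := exists_maxEntry (hrows := hrows) (α := α) h2
    rw [hbe]
    exact maxEntry_le h1 ⟨hb1, by omega⟩
  col_strict' := by
    intro i1 i2 c hi h2
    have h1 : (i1, c) ∈ μ := μ.up_left_mem (le_of_lt hi) le_rfl h2
    obtain ⟨b, hb1, hb2, hbe⟩ := exists_maxEntry (hrows := hrows) (α := α) h2
    rw [hbe]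
    have hle := maxEntry_le (hrows := hrows) (α := α) h1 (j := b) ⟨by omega, hb2⟩
    have := hα b
    omega
  zeros' := by
    intro i j h
    rw [maxEntry, dif_neg h]

lemma maxSSYT_end {hrows : μ.colLen 0 ≤ n} {α : Fin n → ℕ} {hα : ∀ j : Fin n, j.val + 1 ≤ α j}
    (hαR : IsRIncr n (Rlam n μ) α) (i : Fin n) (hi : 0 < μ.rowLen i.val) :
    maxSSYT n μ hrows α hα i.val (μ.rowLen i.val - 1) + 1 = α i := by
  have hcell : (i.val, μ.rowLen i.val - 1) ∈ μ := by
    rw [YoungDiagram.mem_iff_lt_rowLen]; omega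
  show maxEntry n μ hrows α i.val (μ.rowLen i.val - 1) + 1 = α i
  have hub := maxEntry_le (hrows := hrows) (α := α) hcell (j := i) ⟨le_rfl, by omega⟩
  have hlb : α i - 1 ≤ maxEntry n μ hrows α i.val (μ.rowLen i.val - 1) := by
    refine le_maxEntry hcell ?_
    intro j hij hjlen
    have hij' : i ≤ j := Fin.le_def.mpr hij
    have hlen : μ.rowLen j.val = μ.rowLen i.val := by
      have := μ.rowLen_anti i.val j.val hij
      omega
    have hsc := sameCarrel_of_rowLen_eq hij' hlen
    have hg := rincr_growth hαR (j.val - i.val) i j (by omega) hsc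
    have := hα j
    omega
  have := hα i
  omega

lemma maxSSYT_mem {hrows : μ.colLen 0 ≤ n} {α : Fin n → ℕ} (hα : IsUpperTuple n α)
    (hαR : IsRIncr n (Rlam n μ) α) :
    maxSSYT n μ hrows α (fun j => (hα j).1) ∈ RowBoundSet n μ α := by
  constructor
  · intro c hc
    rw [YoungDiagram.mem_cells] at hc
    have hc' : (c.1, c.2) ∈ μ := hc
    have hr : c.1 < n := lt_of_lt_of_le (YoungDiagram.mem_iff_lt_colLen.mp
      (μ.up_left_mem le_rfl (Nat.zero_le c.2) hc')) hrows
    have hle := maxEntry_le (hrows := hrows) (α := α) hc'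
      (j := ⟨c.1, hr⟩) ⟨le_rfl, YoungDiagram.mem_iff_lt_rowLen.mp hc'⟩
    have h1 := (hα ⟨c.1, hr⟩).2
    calc (maxSSYT n μ hrows α (fun j => (hα j).1)) c.1 c.2
        ≤ α ⟨c.1, hr⟩ + c.1 - (c.1 + 1) := hle
      _ < n := by omega
  · intro i hi
    have := maxSSYT_end (hrows := hrows) (hα := fun j => (hα j).1) hαR i hi
    omega

lemma bound_le {hrows : μ.colLen 0 ≤ n} {α β : Fin n → ℕ}
    (hα : IsRIncrUpper n (Rlam n μ) α)
    (hsub : RowBoundSet n μ α ⊆ RowBoundSet n μ β)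
    (i : Fin n) (hi : 0 < μ.rowLen i.val) : α i ≤ β i := by
  have hmem := maxSSYT_mem (hrows := hrows) hα.1 hα.2
  have h2 := (hsub hmem).2 i hi
  have := maxSSYT_end (hrows := hrows) (hα := fun j => (hα.1 j).1) hα.2 i hi
  omega

lemma rincr_upper_inj (hrows : μ.colLen 0 ≤ n) {α α' : Fin n → ℕ}
    (hα : IsRIncrUpper n (Rlam n μ) α) (hα' : IsRIncrUpper n (Rlam n μ) α')
    (hS : RowBoundSet n μ α = RowBoundSet n μ α') : α = α' := by
  funext i
  rcases Nat.eq_zero_or_pos (μ.rowLen i.val) with h0 | hpos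
  · rw [rincr_upper_forced hrows hα h0, rincr_upper_forced hrows hα' h0]
  · exact le_antisymm (bound_le (hrows := hrows) hα hS.le i hpos)
      (bound_le (hrows := hrows) hα' hS.ge i hpos)

lemma rowBoundSet_coreMap (hrows : μ.colLen 0 ≤ n) {β : Fin n → ℕ} (hβ : IsUpperTuple n β) :
    RowBoundSet n μ β = RowBoundSet n μ (coreMap n (Rlam n μ) β) := by
  ext T
  simp only [RowBoundSet, Set.mem_setOf_eq]
  constructor
  · rintro ⟨h1, h2⟩
    refine ⟨h1, fun i hi => ?_⟩
    obtain ⟨x, hxi, hxsc, heq, _⟩ := coreMap_spec (R := Rlam n μ) β (fun i => (hβ i).1) i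
    have hxi' : i.val ≤ x.val := hxi
    have hlen := rowLen_eq_of_sameCarrel hxi hxsc
    have hcell : (i.val + (x.val - i.val), μ.rowLen i.val - 1) ∈ μ := by
      rw [YoungDiagram.mem_iff_lt_rowLen]
      have : i.val + (x.val - i.val) = x.val := by omega
      rw [this, hlen]; omega
    have hchain := ssyt_col_chain T (μ.rowLen i.val - 1) (x.val - i.val) i.val hcell
    have hend := h2 x (by rw [hlen]; exact hi)
    rw [hlen] at hend
    have hix : i.val + (x.val - i.val) = x.val := by omega
    rw [hix] at hchain
    omega
  · rintro ⟨h1, h2⟩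
    refine ⟨h1, fun i hi => ?_⟩
    obtain ⟨x, hxi, hxsc, heq, hall⟩ := coreMap_spec (R := Rlam n μ) β (fun i => (hβ i).1) i
    have := hall i le_rfl (sc_self (R := Rlam n μ) i)
    have := h2 i hi
    omega

end MaxTab

/-- S_λ(β) = S_λ(β′) iff Δ_λ(β) = Δ_λ(β′); consequently the distinct row bound tableau
sets are precisely indexed by the R_λ-increasing upper tuples. -/
theorem stmt17 (n : ℕ) (μ : YoungDiagram) (hrows : μ.colLen 0 ≤ n)
    (β β' : Fin n → ℕ) (hβ : ∀ i : Fin n, i.val + 1 ≤ β i ∧ β i ≤ n)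
    (hβ' : ∀ i : Fin n, i.val + 1 ≤ β' i ∧ β' i ≤ n) :
    (RowBoundSet n μ β = RowBoundSet n μ β' ↔
        coreMap n (Rlam n μ) β = coreMap n (Rlam n μ) β') ∧
    (∀ β'' : Fin n → ℕ, (∀ i : Fin n, i.val + 1 ≤ β'' i ∧ β'' i ≤ n) →
        ∃! α : Fin n → ℕ,
          IsRIncrUpper n (Rlam n μ) α ∧ RowBoundSet n μ α = RowBoundSet n μ β'') := by
  constructor
  · constructor
    · intro h
      have e1 : RowBoundSet n μ (coreMap n (Rlam n μ) β)
          = RowBoundSet n μ (coreMap n (Rlam n μ) β') := by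
        rw [← rowBoundSet_coreMap hrows hβ, ← rowBoundSet_coreMap hrows hβ', h]
      exact rincr_upper_inj hrows ⟨coreMap_upper hβ, coreMap_rincr hβ⟩
        ⟨coreMap_upper hβ', coreMap_rincr hβ'⟩ e1
    · intro h
      rw [rowBoundSet_coreMap hrows hβ, rowBoundSet_coreMap hrows hβ', h]
  · intro β'' hβ''
    refine ⟨coreMap n (Rlam n μ) β'', ⟨⟨coreMap_upper hβ'', coreMap_rincr hβ''⟩,
      (rowBoundSet_coreMap hrows hβ'').symm⟩, ?_⟩
    rintro α' ⟨hα', hSα'⟩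
    exact rincr_upper_inj hrows hα' ⟨coreMap_upper hβ'', coreMap_rincr hβ''⟩
      (hSα'.trans (rowBoundSet_coreMap hrows hβ''))
end

section
/- Let λ and λ′ be partitions with at most n parts, β an upper λ-tuple and β′ an upper λ′-tuple. If the generating functions s_λ(β;x) = Σ_{T ∈ S_λ(β)} x^{Θ(T)} and s_{λ′}(β′;x) are equal as polynomials in x_1,...,x_n, then λ = λ′. -/
/-- The number of cells of μ in which T has (0-based) entry v. -/
def contentOf (μ : YoungDiagram) (T : SemistandardYoungTableau μ) (v : ℕ) : ℕ :=
  (μ.cells.filter (fun c => T c.1 c.2 = v)).card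

namespace Stmt18Aux
open Finset

lemma le_entry (μ : YoungDiagram) (T : SemistandardYoungTableau μ) :
    ∀ i j, (i, j) ∈ μ → i ≤ T i j := by
  intro i
  induction i with
  | zero => intro j _; exact Nat.zero_le _
  | succ i ih =>
    intro j hmem
    have h1 : (i, j) ∈ μ := μ.up_left_mem (Nat.le_succ i) le_rfl hmem
    exact Nat.succ_le_of_lt (lt_of_le_of_lt (ih j h1) (T.col_strict (Nat.lt_succ_self i) hmem))

lemma sum_rowLen (μ : YoungDiagram) (k : ℕ) :
    ∑ i ∈ range k, μ.rowLen i = (μ.cells.filter (fun c => c.1 < k)).card := by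
  rw [Finset.card_eq_sum_card_fiberwise (f := Prod.fst) (t := range k)
    (fun c hc => mem_range.2 (mem_filter.1 hc).2)]
  refine Finset.sum_congr rfl fun i hi => ?_
  rw [Finset.filter_filter, μ.rowLen_eq_card]
  congr 1
  apply Finset.filter_congr
  intro c _
  simp only [iff_and_self]
  rintro rfl
  exact mem_range.1 hi

lemma sum_content (μ : YoungDiagram) (T : SemistandardYoungTableau μ) (k : ℕ) :
    ∑ v ∈ range k, contentOf μ T v = (μ.cells.filter (fun c => T c.1 c.2 < k)).card := by
  rw [Finset.card_eq_sum_card_fiberwise (s := μ.cells.filter (fun c => T c.1 c.2 < k))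
    (f := fun c => T c.1 c.2) (t := range k)
    (fun c hc => mem_range.2 (mem_filter.1 hc).2)]
  refine Finset.sum_congr rfl fun v hv => ?_
  unfold contentOf
  rw [Finset.filter_filter]
  congr 1
  apply Finset.filter_congr
  intro c _
  simp only [iff_and_self]
  rintro rfl
  exact mem_range.1 hv

lemma finite_subtype (n : ℕ) (μ : YoungDiagram) (β : Fin n → ℕ) (θ : Fin n → ℕ) :
    Finite {T : SemistandardYoungTableau μ //
      T ∈ RowBoundSet n μ β ∧ ∀ v : Fin n, contentOf μ T v.val = θ v} := by
  apply Finite.of_injective (f := fun T =>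
    (fun c : {x // x ∈ μ.cells} => (⟨T.1 c.1.1 c.1.2, T.2.1.1 c.1 c.2⟩ : Fin n)))
  intro T T' hTT
  ext i j
  by_cases hmem : (i, j) ∈ μ
  · have := congrFun hTT ⟨(i, j), hmem⟩
    exact congrArg Fin.val this
  · rw [T.1.zeros hmem, T'.1.zeros hmem]

lemma hw_props (n : ℕ) (μ : YoungDiagram) (hrows : μ.colLen 0 ≤ n)
    (β : Fin n → ℕ) (hβ : ∀ i : Fin n, i.val + 1 ≤ β i ∧ β i ≤ n) :
    SemistandardYoungTableau.highestWeight μ ∈ RowBoundSet n μ β ∧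
      ∀ v : Fin n, contentOf μ (SemistandardYoungTableau.highestWeight μ) v.val = μ.rowLen v := by
  have hrow : ∀ c ∈ μ.cells, c.1 < n := by
    intro c hc
    have h0 : (c.1, 0) ∈ μ := μ.up_left_mem le_rfl (Nat.zero_le _) ((YoungDiagram.mem_cells _).1 hc)
    exact lt_of_lt_of_le (YoungDiagram.mem_iff_lt_colLen.1 h0) hrows
  refine ⟨⟨?_, ?_⟩, ?_⟩
  · intro c hc
    have := hrow c hc
    simp only [SemistandardYoungTableau.highestWeight_apply]
    rw [if_pos ((YoungDiagram.mem_cells _).1 hc)]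
    exact this
  · intro i hpos
    have hmem : (i.val, μ.rowLen i.val - 1) ∈ μ :=
      YoungDiagram.mem_iff_lt_rowLen.2 (Nat.sub_lt hpos Nat.one_pos)
    simp only [SemistandardYoungTableau.highestWeight_apply]
    rw [if_pos hmem]
    exact lt_of_lt_of_le (Nat.lt_succ_self _) (hβ i).1
  · intro v
    unfold contentOf
    rw [μ.rowLen_eq_card]
    congr 1
    apply Finset.filter_congr
    intro c hc
    rw [SemistandardYoungTableau.highestWeight_apply, if_pos ((YoungDiagram.mem_cells _).1 hc)]

lemma dominance (n : ℕ) (μ μ' : YoungDiagram) (T : SemistandardYoungTableau μ')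
    (hent : ∀ c ∈ μ'.cells, T c.1 c.2 < n)
    (hcont : ∀ v : Fin n, contentOf μ' T v.val = μ.rowLen v)
    (k : ℕ) (hk : k ≤ n) :
    ∑ v ∈ range k, μ.rowLen v ≤ ∑ i ∈ range k, μ'.rowLen i := by
  have h1 : ∑ v ∈ range k, μ.rowLen v = ∑ v ∈ range k, contentOf μ' T v := by
    refine Finset.sum_congr rfl fun v hv => ?_
    exact (hcont ⟨v, lt_of_lt_of_le (mem_range.1 hv) hk⟩).symm
  rw [h1, sum_content, sum_rowLen]
  apply Finset.card_le_card
  intro c hc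
  obtain ⟨hc1, hc2⟩ := mem_filter.1 hc
  exact mem_filter.2 ⟨hc1, lt_of_le_of_lt
    (le_entry μ' T c.1 c.2 ((YoungDiagram.mem_cells _).1 hc1)) hc2⟩

lemma total_eq (n : ℕ) (μ μ' : YoungDiagram) (hrows' : μ'.colLen 0 ≤ n)
    (T : SemistandardYoungTableau μ')
    (hent : ∀ c ∈ μ'.cells, T c.1 c.2 < n)
    (hcont : ∀ v : Fin n, contentOf μ' T v.val = μ.rowLen v) :
    ∑ v ∈ range n, μ.rowLen v = ∑ i ∈ range n, μ'.rowLen i := by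
  have h1 : ∑ v ∈ range n, μ.rowLen v = ∑ v ∈ range n, contentOf μ' T v := by
    refine Finset.sum_congr rfl fun v hv => (hcont ⟨v, mem_range.1 hv⟩).symm
  have hall : ∀ c ∈ μ'.cells, c.1 < n := by
    intro c hc
    have h0 : (c.1, 0) ∈ μ' := μ'.up_left_mem le_rfl (Nat.zero_le _) ((YoungDiagram.mem_cells _).1 hc)
    exact lt_of_lt_of_le (YoungDiagram.mem_iff_lt_colLen.1 h0) hrows'
  rw [h1, sum_content, sum_rowLen, Finset.filter_true_of_mem hent,
    Finset.filter_true_of_mem hall]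

end Stmt18Aux

/-- If the generating functions s_λ(β;x) and s_{λ′}(β′;x) are equal as polynomials in
x_1, ..., x_n — i.e., for every content θ they have equally many tableaux of content θ —
then λ = λ′. -/
theorem stmt18 (n : ℕ) (μ μ' : YoungDiagram)
    (hrows : μ.colLen 0 ≤ n) (hrows' : μ'.colLen 0 ≤ n)
    (β β' : Fin n → ℕ) (hβ : ∀ i : Fin n, i.val + 1 ≤ β i ∧ β i ≤ n)
    (hβ' : ∀ i : Fin n, i.val + 1 ≤ β' i ∧ β' i ≤ n)
    (h : ∀ θ : Fin n → ℕ,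
      Nat.card {T : SemistandardYoungTableau μ //
          T ∈ RowBoundSet n μ β ∧ ∀ v : Fin n, contentOf μ T v.val = θ v} =
      Nat.card {T : SemistandardYoungTableau μ' //
          T ∈ RowBoundSet n μ' β' ∧ ∀ v : Fin n, contentOf μ' T v.val = θ v}) :
    μ = μ' := by
  have key : ∀ (ν ν' : YoungDiagram), ν.colLen 0 ≤ n →
      ∀ (γ γ' : Fin n → ℕ), (∀ i : Fin n, i.val + 1 ≤ γ i ∧ γ i ≤ n) →
      (∀ θ : Fin n → ℕ,
        Nat.card {T : SemistandardYoungTableau ν //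
            T ∈ RowBoundSet n ν γ ∧ ∀ v : Fin n, contentOf ν T v.val = θ v} =
        Nat.card {T : SemistandardYoungTableau ν' //
            T ∈ RowBoundSet n ν' γ' ∧ ∀ v : Fin n, contentOf ν' T v.val = θ v}) →
      ∃ T' : SemistandardYoungTableau ν', (∀ c ∈ ν'.cells, T' c.1 c.2 < n) ∧
        ∀ v : Fin n, contentOf ν' T' v.val = ν.rowLen v.val := by
    intro ν ν' hr γ γ' hγ heq
    obtain ⟨hmem, hcont⟩ := Stmt18Aux.hw_props n ν hr γ hγ
    haveI := Stmt18Aux.finite_subtype n ν γ (fun v : Fin n => ν.rowLen v.val)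
    haveI : Nonempty {T : SemistandardYoungTableau ν //
        T ∈ RowBoundSet n ν γ ∧ ∀ v : Fin n,
          contentOf ν T v.val = (fun v : Fin n => ν.rowLen v.val) v} :=
      ⟨⟨_, hmem, hcont⟩⟩
    have hpos : 0 < Nat.card {T : SemistandardYoungTableau ν //
        T ∈ RowBoundSet n ν γ ∧ ∀ v : Fin n,
          contentOf ν T v.val = (fun v : Fin n => ν.rowLen v.val) v} := Nat.card_pos
    rw [heq (fun v : Fin n => ν.rowLen v.val)] at hpos
    obtain ⟨⟨T', hT'mem, hT'cont⟩⟩ := (Nat.card_pos_iff.mp hpos).1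
    exact ⟨T', hT'mem.1, hT'cont⟩
  obtain ⟨T1, hT1e, hT1c⟩ := key μ μ' hrows β β' hβ h
  obtain ⟨T2, hT2e, hT2c⟩ := key μ' μ hrows' β' β hβ' (fun θ => (h θ).symm)
  have hab : ∀ k, k ≤ n →
      ∑ v ∈ Finset.range k, μ.rowLen v = ∑ v ∈ Finset.range k, μ'.rowLen v :=
    fun k hk => le_antisymm (Stmt18Aux.dominance n μ μ' T1 hT1e hT1c k hk)
      (Stmt18Aux.dominance n μ' μ T2 hT2e hT2c k hk)
  have hlen : ∀ i, μ.rowLen i = μ'.rowLen i := by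
    intro i
    by_cases hi : i < n
    · have h1 := hab i (le_of_lt hi)
      have h2 := hab (i + 1) hi
      rw [Finset.sum_range_succ, Finset.sum_range_succ, h1] at h2
      exact Nat.add_left_cancel h2
    · push_neg at hi
      have z1 : μ.rowLen i = 0 := by
        by_contra hz
        have hm : (i, 0) ∈ μ := YoungDiagram.mem_iff_lt_rowLen.2 (Nat.pos_of_ne_zero hz)
        exact absurd (lt_of_lt_of_le (YoungDiagram.mem_iff_lt_colLen.1 hm) hrows)
          (not_lt.2 hi)
      have z2 : μ'.rowLen i = 0 := by
        by_contra hz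
        have hm : (i, 0) ∈ μ' := YoungDiagram.mem_iff_lt_rowLen.2 (Nat.pos_of_ne_zero hz)
        exact absurd (lt_of_lt_of_le (YoungDiagram.mem_iff_lt_colLen.1 hm) hrows')
          (not_lt.2 hi)
      rw [z1, z2]
  ext ⟨i, j⟩
  rw [YoungDiagram.mem_cells, YoungDiagram.mem_cells, YoungDiagram.mem_iff_lt_rowLen,
    YoungDiagram.mem_iff_lt_rowLen, hlen i]
end

section
/- For an R-312-avoiding R-permutation π, the minimum-length 312-avoiding permutation σ lifting π (i.e., with R-projection equal to π) satisfies Δ_R(Ψ(σ)) = Ψ_R(π), where Ψ is the full rank-tuple map (case R = [n−1]) and Ψ_R is the rank R-tuple map. -/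
/-- The full rank tuple Ψ(σ): its i-th entry is max{σ_1, ..., σ_i} (1-based values). -/
def psiFull (n : ℕ) (σ : Equiv.Perm (Fin n)) (i : Fin n) : ℕ :=
  (Finset.univ.filter (fun j : Fin n => j ≤ i)).sup (fun j => (σ j).val + 1)

/-- The Coxeter length (number of inversions) of a permutation. -/
def invCount (n : ℕ) (σ : Equiv.Perm (Fin n)) : ℕ :=
  (Finset.univ.filter (fun p : Fin n × Fin n => p.1 < p.2 ∧ σ p.2 < σ p.1)).card

/-!
Write `ν = Ψ(σ)`, let `q` be the end of the carrel of `i` and `r` the `(i+1)`-st smallest of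
`σ_1, …, σ_q`. Counting the values below `r` gives `ν_k ≥ r + (k - i)` for all `k ≥ i` in the
carrel. If `p` is the last position up to `q` with `σ_p ≤ r`, 312-avoidance forces every value
between `σ_p` and `ν_p` to occur before `p`, so equality holds at `p`. The last position of
equality is the first critical position from `i` on, where `Δ_R` reads off `r`. Since `σ` and `π`
have the same first `q` values, `r` is also the `i`-th entry of `Ψ_R(π)`.
-/

open Finset

section Carrel

variable {n : ℕ} {R : Finset ℕ} (i : Fin n)

lemma carrelEnd_mem_insert : carrelEnd n R i ∈ insert n R :=
  (mem_filter.1 (min'_mem _ _)).1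

lemma lt_carrelEnd : i.val < carrelEnd n R i :=
  (mem_filter.1 (min'_mem _ _)).2

lemma carrelEnd_le : carrelEnd n R i ≤ n :=
  min'_le _ n (mem_filter.2 ⟨mem_insert_self n R, i.isLt⟩)

lemma carrelEnd_le_of_mem {p : ℕ} (hp : p ∈ R) (hip : i.val < p) : carrelEnd n R i ≤ p :=
  min'_le _ p (mem_filter.2 ⟨mem_insert_of_mem hp, hip⟩)

lemma sameCarrel_iff_lt_carrelEnd {a b : Fin n} (hia : i ≤ a) (ha : a.val < carrelEnd n R i) :
    SameCarrel R a b ↔ b.val < carrelEnd n R i := by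
  constructor
  · intro hab
    by_contra! hb
    rcases mem_insert.1 (carrelEnd_mem_insert (R := R) i) with hn | hR
    · omega
    · exact hab _ hR ⟨by omega, hb⟩
  · rintro hb p hp ⟨hap, hpb⟩
    have := carrelEnd_le_of_mem (R := R) i hp (by rw [Fin.le_def] at hia; omega)
    omega

end Carrel

section Core

variable {n : ℕ} {R : Finset ℕ} {ν : Fin n → ℕ} {i : Fin n}

open Classical in
lemma coreMap_eq_of_isCritical {x : Fin n} (hix : i ≤ x) (hx : SameCarrel R i x)
    (hcrit : IsCritical n R ν x)
    (hfirst : ∀ y : Fin n, i ≤ y → y < x → SameCarrel R i y → ¬ IsCritical n R ν y) :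
    coreMap n R ν i = ν x - (x.val - i.val) := by
  set s : Finset (Fin n) := {y | i ≤ y ∧ SameCarrel R i y ∧ IsCritical n R ν y}
  have hxs : x ∈ s := mem_filter.2 ⟨mem_univ x, hix, hx, hcrit⟩
  have hmin : s.min' ⟨x, hxs⟩ = x := by
    obtain ⟨-, hiy, hy, hycrit⟩ := mem_filter.1 (s.min'_mem ⟨x, hxs⟩)
    by_contra hne
    exact hfirst _ hiy (lt_of_le_of_ne (s.min'_le x hxs) hne) hy hycrit
  simp only [coreMap]
  rw [dif_pos ⟨x, hxs⟩, hmin]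

/-- The last position attaining the bound is the first critical one. -/
theorem coreMap_eq_of_forall_le_of_exists_eq {r : ℕ}
    (hle : ∀ k : Fin n, i ≤ k → k.val < carrelEnd n R i → r + k.val ≤ ν k + i.val)
    (heq : ∃ p : Fin n, i ≤ p ∧ p.val < carrelEnd n R i ∧ ν p + i.val = r + p.val) :
    coreMap n R ν i = r := by
  classical
  set E : Finset (Fin n) := {k | i ≤ k ∧ k.val < carrelEnd n R i ∧ ν k + i.val = r + k.val}
  obtain ⟨p, hp⟩ := heq
  have hE : E.Nonempty := ⟨p, mem_filter.2 ⟨mem_univ p, hp⟩⟩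
  obtain ⟨-, hix, hxq, hx⟩ := mem_filter.1 (E.max'_mem hE)
  set x := E.max' hE
  have hcrit : IsCritical n R ν x := by
    intro j hxj hsc
    have hjq := (sameCarrel_iff_lt_carrelEnd i hix hxq).1 hsc
    have hij : i ≤ j := hix.trans hxj.le
    have hjE : j ∉ E := fun hj => (E.le_max' j hj).not_gt hxj
    have hjlow := hle j hij hjq
    simp only [E, mem_filter, mem_univ, true_and, not_and] at hjE
    have hjne := hjE hij hjq
    rw [Fin.lt_def] at hxj
    omega
  rw [coreMap_eq_of_isCritical hix ((sameCarrel_iff_lt_carrelEnd i le_rfl (lt_carrelEnd i)).2 hxq)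
    hcrit ?_]
  · rw [Fin.le_def] at hix
    omega
  intro y hiy hyx hy hycrit
  have hyq := (sameCarrel_iff_lt_carrelEnd i le_rfl (lt_carrelEnd i)).1 hy
  have hyx' := hycrit x hyx ((sameCarrel_iff_lt_carrelEnd i hiy hyq).2 hxq)
  have hylow := hle y hiy hyq
  rw [Fin.le_def] at hiy
  omega

end Core

section PsiFull

variable {n : ℕ} (σ : Equiv.Perm (Fin n))

lemma succ_val_injective : Function.Injective fun j => (σ j).val + 1 :=
  (Nat.succ_injective.comp Fin.val_injective).comp σ.injective

lemma psiFull_eq_sup_Iic (k : Fin n) : psiFull n σ k = (Iic k).sup fun j => (σ j).val + 1 := by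
  rw [psiFull, filter_ge_eq_Iic]

lemma le_psiFull {a k : Fin n} (hak : a ≤ k) : (σ a).val + 1 ≤ psiFull n σ k := by
  rw [psiFull_eq_sup_Iic]
  exact le_sup (f := fun j => (σ j).val + 1) (mem_Iic.2 hak)

lemma psiFull_le (k : Fin n) : psiFull n σ k ≤ n := by
  rw [psiFull_eq_sup_Iic]
  exact Finset.sup_le fun j _ => (σ j).isLt

lemma exists_eq_psiFull (k : Fin n) : ∃ a ≤ k, (σ a).val + 1 = psiFull n σ k := by
  obtain ⟨a, ha, hsup⟩ := exists_mem_eq_sup (Iic k) nonempty_Iic fun j => (σ j).val + 1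
  exact ⟨a, mem_Iic.1 ha, by rw [psiFull_eq_sup_Iic, hsup]⟩

/-- The entries of `σ` up to `k` that are at least `r` are distinct values in `[r, Ψ(σ)_k]`. -/
lemma add_le_psiFull_add {k : Fin n} {i r : ℕ} (hik : i ≤ k.val)
    (hsmall : #{j ∈ Iic k | (σ j).val + 1 < r} ≤ i) : r + k.val ≤ psiFull n σ k + i := by
  have hlarge : #{j ∈ Iic k | ¬ (σ j).val + 1 < r} ≤ psiFull n σ k + 1 - r := by
    calc _ ≤ #(Icc r (psiFull n σ k)) :=
          card_le_card_of_injOn (fun j => (σ j).val + 1)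
            (fun j hj => by
              obtain ⟨hjk, hjr⟩ := mem_filter.1 hj
              exact mem_Icc.2 ⟨not_lt.1 hjr, le_psiFull σ (mem_Iic.1 hjk)⟩)
            ((succ_val_injective σ).injOn)
      _ = _ := Nat.card_Icc _ _
  have hsplit := card_filter_add_card_filter_not (s := Iic k) fun j => (σ j).val + 1 < r
  rw [Fin.card_Iic] at hsplit
  omega

variable {σ}

/-- Otherwise the position of the running maximum at `p`, `p` and `c` form a 312 pattern. -/
lemma Avoids312.le_of_lt_of_le_psiFull (hσ : Avoids312 n σ) {p c : Fin n} (hpc : σ p < σ c)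
    (hc : (σ c).val + 1 ≤ psiFull n σ p) : c ≤ p := by
  by_contra! hpc'
  obtain ⟨a, hap, ha⟩ := exists_eq_psiFull σ p
  have hca : σ c < σ a := by
    refine lt_of_le_of_ne (Fin.le_def.2 (by omega)) fun h => ?_
    rw [σ.injective h] at hpc'
    exact hap.not_gt hpc'
  have hap' : a < p := lt_of_le_of_ne hap fun h => (h ▸ hpc.trans hca).false
  exact hσ ⟨a, p, c, hap', hpc', hpc.trans hca, hpc, hca⟩

lemma Avoids312.psiFull_add_le (hσ : Avoids312 n σ) {p : Fin n} {i r : ℕ}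
    (hpr : (σ p).val + 1 ≤ r) (hsmall : i + 1 ≤ #{j ∈ Iic p | (σ j).val + 1 ≤ r}) :
    psiFull n σ p + i ≤ r + p.val := by
  have hlarge : Ioc r (psiFull n σ p) ⊆
      {j ∈ Iic p | ¬ (σ j).val + 1 ≤ r}.image fun j => (σ j).val + 1 := by
    intro v hv
    obtain ⟨hrv, hvp⟩ := mem_Ioc.1 hv
    have hvn : v - 1 < n := by have := psiFull_le σ p; omega
    set c := σ.symm ⟨v - 1, hvn⟩
    have hσc : (σ c).val + 1 = v := by simp only [c, Equiv.apply_symm_apply]; omega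
    have hcp : c ≤ p := hσ.le_of_lt_of_le_psiFull (Fin.lt_def.2 (by omega)) (by omega)
    exact mem_image.2 ⟨c, mem_filter.2 ⟨mem_Iic.2 hcp, by omega⟩, hσc⟩
  have hcard := (card_le_card hlarge).trans card_image_le
  have hsplit := card_filter_add_card_filter_not (s := Iic p) fun j => (σ j).val + 1 ≤ r
  rw [Nat.card_Ioc] at hcard
  rw [Fin.card_Iic] at hsplit
  omega

theorem Avoids312.coreMap_psiFull_eq (hσ : Avoids312 n σ) (R : Finset ℕ) (i : Fin n) {r : ℕ}
    (hr : ∃ m : Fin n, m.val < carrelEnd n R i ∧ (σ m).val + 1 = r)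
    (hcount : #{j : Fin n | j.val < carrelEnd n R i ∧ (σ j).val + 1 < r} = i.val) :
    coreMap n R (psiFull n σ) i = r := by
  set q := carrelEnd n R i
  obtain ⟨m, hmq, hmr⟩ := hr
  set S : Finset (Fin n) := {j | j.val < q ∧ (σ j).val + 1 < r}
  set P : Finset (Fin n) := {j | j.val < q ∧ (σ j).val + 1 ≤ r}
  have hPcard : i.val + 1 ≤ #P := by
    have hsub : insert m S ⊆ P := by
      intro j hj
      simp only [S, P, mem_insert, mem_filter, mem_univ, true_and] at hj ⊢
      rcases hj with rfl | ⟨hjq, hjr⟩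
      · exact ⟨hmq, hmr.le⟩
      · exact ⟨hjq, hjr.le⟩
    have hm : m ∉ S := by simp [S, hmr]
    rw [← hcount, ← card_insert_of_notMem hm]
    exact card_le_card hsub
  have hP : P.Nonempty := card_pos.1 (by omega)
  obtain ⟨-, hpq, hpr⟩ := mem_filter.1 (P.max'_mem hP)
  set p := P.max' hP
  have hPp : P ⊆ {j ∈ Iic p | (σ j).val + 1 ≤ r} := fun j hj =>
    mem_filter.2 ⟨mem_Iic.2 (P.le_max' j hj), (mem_filter.1 hj).2.2⟩
  have hip : i ≤ p := by
    have := (hPcard.trans (card_le_card hPp)).trans (card_filter_le _ _)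
    rw [Fin.card_Iic] at this
    exact Fin.le_def.2 (by omega)
  have hle : ∀ k : Fin n, i ≤ k → k.val < q → r + k.val ≤ psiFull n σ k + i.val := by
    refine fun k hik hkq => add_le_psiFull_add σ hik ((card_le_card fun j hj => ?_).trans hcount.le)
    obtain ⟨hjk, hjr⟩ := mem_filter.1 hj
    have hjk' := Fin.le_def.1 (mem_Iic.1 hjk)
    exact mem_filter.2 ⟨mem_univ j, by omega, hjr⟩
  refine coreMap_eq_of_forall_le_of_exists_eq hle ⟨p, hip, hpq, ?_⟩
  exact le_antisymm (hσ.psiFull_add_le hpr (hPcard.trans (card_le_card hPp))) (hle p hip hpq)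

end PsiFull

lemma Finset.sort_getD_eq_nth (V : Finset ℕ) (i : ℕ) :
    (V.sort (· ≤ ·)).getD i 0 = Nat.nth (· ∈ V) i := by
  rw [Nat.nth_eq_getD_sort (p := (· ∈ V)) V.finite_toSet, finite_toSet_toFinset]

lemma Nat.count_mem_image {α : Type*} {f : α → ℕ} (hf : Function.Injective f) (s : Finset α)
    (r : ℕ) : Nat.count (· ∈ s.image f) r = #{a ∈ s | f a < r} := by
  classical
  rw [Nat.count_eq_card_filter_range, ← Finset.card_image_of_injective _ hf]
  congr 1
  ext v
  simp only [mem_filter, mem_range, mem_image]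
  constructor
  · rintro ⟨hv, a, ha, rfl⟩
    exact ⟨a, ⟨ha, hv⟩, rfl⟩
  · rintro ⟨a, ⟨ha, hv⟩, rfl⟩
    exact ⟨hv, a, ha, rfl⟩

lemma IsRProj.image_succ_val_eq {n : ℕ} {R : Finset ℕ} {σ π : Equiv.Perm (Fin n)}
    (h : IsRProj n R σ π) {q : ℕ} (hq : q ∈ insert n R) :
    ({j : Fin n | j.val < q} : Finset (Fin n)).image (fun j => (σ j).val + 1) =
      ({j : Fin n | j.val < q} : Finset (Fin n)).image (fun j => (π j).val + 1) := by
  have hshift : ∀ τ : Equiv.Perm (Fin n),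
      ({j : Fin n | j.val < q} : Finset (Fin n)).image (fun j => (τ j).val + 1) =
        (({j : Fin n | j.val < q} : Finset (Fin n)).image fun j => τ j).image
          fun x => x.val + 1 := fun τ => by rw [image_image]; rfl
  rw [hshift σ, hshift π]
  rcases mem_insert.1 hq with rfl | hqR
  · simp only [Fin.is_lt, filter_true, image_univ_equiv]
  · rw [h.2 q hqR]

theorem stmt19_general (n : ℕ) (R : Finset ℕ) (π σ : Equiv.Perm (Fin n)) (hσ : Avoids312 n σ)
    (hproj : IsRProj n R σ π) :
    coreMap n R (psiFull n σ) = rankTuple n R π := by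
  funext i
  set V : Finset ℕ := ({j : Fin n | j.val < carrelEnd n R i} : Finset (Fin n)).image
    fun j => (σ j).val + 1
  have hrank : rankTuple n R π i = Nat.nth (· ∈ V) i := by
    rw [rankTuple, ← hproj.image_succ_val_eq (carrelEnd_mem_insert i), sort_getD_eq_nth]
  have hiV : i.val < #V.finite_toSet.toFinset := by
    rw [finite_toSet_toFinset, card_image_of_injective _ (succ_val_injective σ),
      Fin.card_filter_val_lt, min_eq_right (carrelEnd_le i)]
    exact lt_carrelEnd i
  rw [hrank]
  refine hσ.coreMap_psiFull_eq R i ?_ ?_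
  · simpa [V] using Nat.nth_mem_of_lt_card V.finite_toSet hiV
  · rw [← filter_filter, ← Nat.count_mem_image (succ_val_injective σ)]
    exact Nat.count_nth_of_lt_card_finite V.finite_toSet hiV

/-- For an R-312-avoiding R-permutation π, the minimum-length 312-avoiding lift σ of π
satisfies Δ_R(Ψ(σ)) = Ψ_R(π). -/
theorem stmt19 (n : ℕ) (R : Finset ℕ) (hR : R ⊆ Finset.Ico 1 n)
    (π σ : Equiv.Perm (Fin n)) (hπ : IsRPerm n R π) (hav : RAvoids312 n R π)
    (hσ : Avoids312 n σ) (hproj : IsRProj n R σ π)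
    (hmin : ∀ σ' : Equiv.Perm (Fin n),
      Avoids312 n σ' → IsRProj n R σ' π → invCount n σ ≤ invCount n σ') :
    coreMap n R (psiFull n σ) = rankTuple n R π :=
  stmt19_general n R π σ hσ hproj
end
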